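/- Let (X, ρ) be a compact metric space containing points x, y with ρ(x, y) = 1. Define μ₁, μ₂ : C(X) → ℝ by μ₁(φ) = max(φ(x), φ(y) - 2) and μ₂(φ) = max(φ(x), φ(y) - 4). Then μ₁ and μ₂ are idempotent probability measures on X, μ₁ ≠ μ₂, and d_I(μ₁, μ₂) = 0. In particular, d_I is not a metric. -/

import Mathlib

noncomputable section

/-- An idempotent probability measure on a topological space `X`:
a functional `μ : C(X, ℝ) → ℝ` which sends constants to their values,
is `max`-`plus` homogeneous, and turns pointwise maxima into maxima. -/
def IsIPM {X : Type*} [TopologicalSpace X] (μ : C(X, ℝ) → ℝ) : Prop :=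
  (∀ c : ℝ, μ (ContinuousMap.const X c) = c) ∧
  (∀ (c : ℝ) (φ : C(X, ℝ)), μ (ContinuousMap.const X c + φ) = c + μ φ) ∧
  (∀ φ ψ : C(X, ℝ), μ (φ ⊔ ψ) = max (μ φ) (μ ψ))

/-- `ξ` is a `(μ₁, μ₂)`-admissible idempotent probability measure on `X × X`. -/
def IsAdmissible {X : Type*} [TopologicalSpace X]
    (μ₁ μ₂ : C(X, ℝ) → ℝ) (ξ : C(X × X, ℝ) → ℝ) : Prop :=
  IsIPM ξ ∧
  (∀ φ : C(X, ℝ), ξ (φ.comp ⟨Prod.fst, continuous_fst⟩) = μ₁ φ) ∧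
  (∀ φ : C(X, ℝ), ξ (φ.comp ⟨Prod.snd, continuous_snd⟩) = μ₂ φ)

/-- The density of an idempotent probability measure. -/
def idemDensity {Z : Type*} [TopologicalSpace Z] (μ : C(Z, ℝ) → ℝ) (z : Z) : EReal :=
  sInf {r : EReal | ∃ φ : C(Z, ℝ), φ ≤ 0 ∧ φ z = 0 ∧ r = (μ φ : EReal)}

/-- The support of an idempotent probability measure. -/
def idemSupp {Z : Type*} [TopologicalSpace Z] (μ : C(Z, ℝ) → ℝ) : Set Z :=
  {z | ⊥ < idemDensity μ z}

/-- The metric `ρ` of a metric space `X`, as a continuous function on `X × X`. -/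
def rhoFun (X : Type*) [MetricSpace X] : C(X × X, ℝ) :=
  ⟨fun p => dist p.1 p.2, continuous_dist⟩

/-- The Uspenskii-type distance function `d_I` on idempotent probability measures. -/
def dI {X : Type*} [MetricSpace X] (μ₁ μ₂ : C(X, ℝ) → ℝ) : ℝ :=
  sInf {r : ℝ | ∃ ξ : C(X × X, ℝ) → ℝ, IsAdmissible μ₁ μ₂ ξ ∧ r = ξ (rhoFun X)}

/-- The distance function `ρ_I` on idempotent probability measures. -/
def rhoI {X : Type*} [MetricSpace X] (μ₁ μ₂ : C(X, ℝ) → ℝ) : ℝ :=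
  sInf {r : ℝ | ∃ ξ : C(X × X, ℝ) → ℝ, IsAdmissible μ₁ μ₂ ξ ∧
    r = sSup {s : ℝ | ∃ p ∈ idemSupp ξ, s = max (ξ (rhoFun X)) (dist p.1 p.2)}}

/-!
For `x y : X` the functionals `μ_a φ = max (φ x) (φ y - a)` are idempotent probability measures
(max-plus combinations of Dirac measures). The coupling
`ξ Φ = max (Φ (x, x)) (Φ (y, y) - b) ⊔ (Φ (y, x) - a)`, `a ≤ b`, has marginals `μ_a` and `μ_b`, and
`ξ(ρ) = max 0 (max (-b) (ρ(y, x) - a)) = 0` as soon as `ρ(x, y) ≤ a`: in the max-plus world the mass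
that `μ_a` puts on `y` can be moved to `x` at a cost that is invisible next to the cost `0` at
`(x, x)`. Hence `d_I(μ_a, μ_b) = 0` although `μ_a ≠ μ_b` for `a < b`.
-/

section IdempotentMeasure

variable {X : Type*} [TopologicalSpace X]

theorem isIPM_eval (a : X) : IsIPM fun φ : C(X, ℝ) => φ a :=
  ⟨fun _ => rfl, fun _ _ => rfl, fun _ _ => rfl⟩

theorem IsIPM.max_sub {μ ν : C(X, ℝ) → ℝ} (hμ : IsIPM μ) (hν : IsIPM ν) {c : ℝ} (hc : 0 ≤ c) :
    IsIPM fun φ => max (μ φ) (ν φ - c) := by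
  obtain ⟨hμc, hμs, hμm⟩ := hμ
  obtain ⟨hνc, hνs, hνm⟩ := hν
  refine ⟨fun a => ?_, fun a φ => ?_, fun φ ψ => ?_⟩
  all_goals beta_reduce
  · rw [hμc, hνc, max_eq_left (by linarith)]
  · rw [hμs, hνs, add_sub_assoc, max_add_add_left]
  · rw [hμm, hνm, ← max_sub_sub_right, max_max_max_comm]

theorem IsIPM.mono {μ : C(X, ℝ) → ℝ} (hμ : IsIPM μ) {φ ψ : C(X, ℝ)} (h : φ ≤ ψ) :
    μ φ ≤ μ ψ := by
  have hmax := hμ.2.2 φ ψ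
  rw [sup_eq_right.mpr h] at hmax
  rw [hmax]
  exact le_max_left _ _

theorem IsIPM.nonneg {μ : C(X, ℝ) → ℝ} (hμ : IsIPM μ) {φ : C(X, ℝ)} (h : 0 ≤ φ) : 0 ≤ μ φ := by
  simpa only [hμ.1 0] using hμ.mono (show ContinuousMap.const X 0 ≤ φ from h)

def twoPointIPM (x y : X) (a : ℝ) : C(X, ℝ) → ℝ :=
  fun φ => max (φ x) (φ y - a)

def twoPointCoupling (x y : X) (a b : ℝ) : C(X × X, ℝ) → ℝ :=
  fun Φ => max (max (Φ (x, x)) (Φ (y, y) - b)) (Φ (y, x) - a)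

variable (x y : X) {a b : ℝ}

theorem isIPM_twoPointIPM (ha : 0 ≤ a) : IsIPM (twoPointIPM x y a) :=
  (isIPM_eval x).max_sub (isIPM_eval y) ha

theorem isAdmissible_twoPointCoupling (ha : 0 ≤ a) (hab : a ≤ b) :
    IsAdmissible (twoPointIPM x y a) (twoPointIPM x y b) (twoPointCoupling x y a b) := by
  refine ⟨((isIPM_eval _).max_sub (isIPM_eval _) (ha.trans hab)).max_sub (isIPM_eval _) ha,
    fun φ => ?_, fun φ => ?_⟩
  · simp only [twoPointCoupling, twoPointIPM, ContinuousMap.comp_apply, ContinuousMap.coe_mk]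
    rw [max_assoc, max_eq_right (by linarith : φ y - b ≤ φ y - a)]
  · simp only [twoPointCoupling, twoPointIPM, ContinuousMap.comp_apply, ContinuousMap.coe_mk]
    rw [max_right_comm, max_eq_left (by linarith : φ x - a ≤ φ x)]

end IdempotentMeasure

section MetricSpace

variable {X : Type*} [MetricSpace X]

theorem dI_eq_zero_of_isAdmissible {μ₁ μ₂ : C(X, ℝ) → ℝ} {ξ : C(X × X, ℝ) → ℝ}
    (hξ : IsAdmissible μ₁ μ₂ ξ) (hρ : ξ (rhoFun X) = 0) : dI μ₁ μ₂ = 0 := by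
  have hlb : ∀ r ∈ {r : ℝ | ∃ ζ, IsAdmissible μ₁ μ₂ ζ ∧ r = ζ (rhoFun X)}, 0 ≤ r := by
    rintro r ⟨ζ, ⟨hζ, -, -⟩, rfl⟩
    exact hζ.nonneg fun p => dist_nonneg
  have hmem : (0 : ℝ) ∈ {r : ℝ | ∃ ζ, IsAdmissible μ₁ μ₂ ζ ∧ r = ζ (rhoFun X)} := ⟨ξ, hξ, hρ.symm⟩
  exact le_antisymm (csInf_le ⟨0, hlb⟩ hmem) (le_csInf ⟨0, hmem⟩ hlb)

variable {x y : X} {a b : ℝ}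

theorem twoPointCoupling_rhoFun (hxy : dist x y ≤ a) (hb : 0 ≤ b) :
    twoPointCoupling x y a b (rhoFun X) = 0 := by
  simp only [twoPointCoupling, rhoFun, ContinuousMap.coe_mk, dist_self, dist_comm y x]
  rw [max_eq_left (by linarith : 0 - b ≤ 0), max_eq_left (by linarith : dist x y - a ≤ 0)]

theorem dI_twoPointIPM_eq_zero (hxy : dist x y ≤ a) (hab : a ≤ b) :
    dI (twoPointIPM x y a) (twoPointIPM x y b) = 0 :=
  have ha : 0 ≤ a := dist_nonneg.trans hxy
  dI_eq_zero_of_isAdmissible (isAdmissible_twoPointCoupling x y ha hab)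
    (twoPointCoupling_rhoFun hxy (ha.trans hab))

theorem twoPointIPM_ne (hxy : x ≠ y) (hab : a < b) : twoPointIPM x y a ≠ twoPointIPM x y b := by
  intro h
  have hd : dist x y ≠ 0 := dist_ne_zero.mpr hxy
  -- `φ` vanishes at `x` and exceeds `φ x + a` at `y`, so only `μ_a` sees the value at `y`
  have hφ := congrFun h ⟨fun p => (a + 1) * dist x p / dist x y, by fun_prop⟩
  simp only [twoPointIPM, ContinuousMap.coe_mk, dist_self, mul_zero, zero_div,
    mul_div_cancel_right₀ _ hd] at hφ
  rw [max_eq_right (by linarith : (0 : ℝ) ≤ a + 1 - a)] at hφ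
  exact (max_lt (by linarith) (by linarith) : max 0 (a + 1 - b) < a + 1 - a).ne' hφ

end MetricSpace

theorem stmt9_general {X : Type*} [MetricSpace X]
    (x y : X) (hxy : dist x y = 1)
    (μ₁ μ₂ : C(X, ℝ) → ℝ)
    (hμ₁ : ∀ φ : C(X, ℝ), μ₁ φ = max (φ x) (φ y - 2))
    (hμ₂ : ∀ φ : C(X, ℝ), μ₂ φ = max (φ x) (φ y - 4)) :
    IsIPM μ₁ ∧ IsIPM μ₂ ∧ μ₁ ≠ μ₂ ∧ dI μ₁ μ₂ = 0 ∧
    ¬ (∀ ν₁ ν₂ : C(X, ℝ) → ℝ, IsIPM ν₁ → IsIPM ν₂ → dI ν₁ ν₂ = 0 → ν₁ = ν₂) := by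
  obtain rfl : μ₁ = twoPointIPM x y 2 := funext hμ₁
  obtain rfl : μ₂ = twoPointIPM x y 4 := funext hμ₂
  have hipm₁ := isIPM_twoPointIPM x y (a := 2) (by norm_num)
  have hipm₂ := isIPM_twoPointIPM x y (a := 4) (by norm_num)
  have hne : twoPointIPM x y 2 ≠ twoPointIPM x y 4 :=
    twoPointIPM_ne (dist_ne_zero.mp (by norm_num [hxy])) (by norm_num)
  have hdI : dI (twoPointIPM x y 2) (twoPointIPM x y 4) = 0 :=
    dI_twoPointIPM_eq_zero (by norm_num [hxy]) (by norm_num)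
  exact ⟨hipm₁, hipm₂, hne, hdI, fun h => hne (h _ _ hipm₁ hipm₂ hdI)⟩

theorem stmt9 {X : Type*} [MetricSpace X] [CompactSpace X]
    (x y : X) (hxy : dist x y = 1)
    (μ₁ μ₂ : C(X, ℝ) → ℝ)
    (hμ₁ : ∀ φ : C(X, ℝ), μ₁ φ = max (φ x) (φ y - 2))
    (hμ₂ : ∀ φ : C(X, ℝ), μ₂ φ = max (φ x) (φ y - 4)) :
    IsIPM μ₁ ∧ IsIPM μ₂ ∧ μ₁ ≠ μ₂ ∧ dI μ₁ μ₂ = 0 ∧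
    ¬ (∀ ν₁ ν₂ : C(X, ℝ) → ℝ, IsIPM ν₁ → IsIPM ν₂ → dI ν₁ ν₂ = 0 → ν₁ = ν₂) :=
  stmt9_general x y hxy μ₁ μ₂ hμ₁ hμ₂
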